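/- arXiv:2510.19780 — 5 statements merged into one kernel-verified Lean document; each statement's English description precedes it below -/
import Mathlib

section
/- Let G = (V, E) be a weighted digraph with nonnegative weights satisfying Assumptions 1 and 2, let s ∈ V have no incoming edges, let t be a positive integer, and let G' be the graph obtained from G by contracting Near_t(s) into s. Then: (a) for every vertex v ∈ V \ Near_t(s), dist_G(s, v) = dist_{G'}(s, v); and (b) for all u, v ∈ V \ Near_t(s), dist_G(u, v) ≤ dist_{G'}(u, v). -/
/-- A path from `s` to `t` in the digraph with edge set `E`: a finite sequence of edges
in which the head of each edge equals the tail of the next, starting at `s`, ending at `t`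
(the empty sequence is a path from `s` to `s`). Paths need not be simple. -/
inductive IsPath {V : Type*} (E : Set (V × V)) : V → V → List (V × V) → Prop
  | nil (s : V) : IsPath E s s []
  | cons {s u t : V} {P : List (V × V)} :
      (s, u) ∈ E → IsPath E u t P → IsPath E s t ((s, u) :: P)

/-- The weight of a path: the sum of its edge weights. -/
def pweight {V : Type*} (w : V × V → ℝ) (P : List (V × V)) : ℝ :=
  (P.map w).sum

/-- `distG E w u v` is the minimum weight of a path from `u` to `v`
(`+∞` if there is no such path). -/
noncomputable def distG {V : Type*} (E : Set (V × V)) (w : V × V → ℝ) (u v : V) : EReal :=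
  sInf {r : EReal | ∃ P : List (V × V), IsPath E u v P ∧ r = (pweight w P : EReal)}

/-- `v` is reachable from `u`. -/
def Reach {V : Type*} (E : Set (V × V)) (u v : V) : Prop :=
  ∃ P : List (V × V), IsPath E u v P

/-- Assumption 1: every proper (contiguous) subpath of a path has strictly smaller weight. -/
def Assumption1 {V : Type*} (E : Set (V × V)) (w : V × V → ℝ) : Prop :=
  ∀ (s t : V) (P : List (V × V)), IsPath E s t P →
    ∀ A P' B : List (V × V), P = A ++ P' ++ B → A ++ B ≠ [] →
      pweight w P' < pweight w P

/-- Assumption 2: for a fixed origin `u`, no two paths from `u` to distinct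
targets have equal weight. -/
def Assumption2 {V : Type*} (E : Set (V × V)) (w : V × V → ℝ) : Prop :=
  ∀ (u x y : V) (P₁ P₂ : List (V × V)), IsPath E u x P₁ → IsPath E u y P₂ → x ≠ y →
    pweight w P₁ ≠ pweight w P₂

/-- The edge set of the subgraph induced on the complement of `Z` (the graph `G − Z`). -/
def ERemove {V : Type*} (E : Set (V × V)) (Z : Set V) : Set (V × V) :=
  {e ∈ E | e.1 ∉ Z ∧ e.2 ∉ Z}

/-- `N` is the set of the `t` vertices distinct from `s` that are nearest to `s`
with respect to `distG` (or all vertices other than `s` reachable from `s`, if fewer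
than `t` of them are reachable). -/
def IsNearSet {V : Type*} (E : Set (V × V)) (w : V × V → ℝ) (s : V) (t : ℕ)
    (N : Finset V) : Prop :=
  s ∉ N ∧ (∀ x ∈ N, Reach E s x) ∧
  (∀ x ∈ N, ∀ y : V, y ∉ N → y ≠ s → Reach E s y → distG E w s x ≤ distG E w s y) ∧
  (N.card = t ∨ (N.card < t ∧ ∀ y : V, y ≠ s → Reach E s y → y ∈ N))

/-- `(a, b)` belongs to `E_t(a)`, i.e. it is among the `t` smallest-weight
outgoing edges of `a`. -/
def InTopT {V : Type*} (E : Set (V × V)) (w : V × V → ℝ) (t : ℕ) (a b : V) : Prop :=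
  (a, b) ∈ E ∧ {c : V | (a, c) ∈ E ∧ w (a, c) < w (a, b)}.ncard < t

/-- `(E', w')` is obtained from `(E, w)` by contracting `X` into `s`:
its vertices avoid `X`; it keeps every edge of `E` avoiding `X`, and has an edge `s → v`
whenever some `x ∈ X` has an edge `x → v` with `v ∉ X`; among the resulting parallel
edges only one of smallest weight (`w (s, v)` itself, or `distG s x + w (x, v)`) is kept. -/
def IsContraction {V : Type*} (E : Set (V × V)) (w : V × V → ℝ) (s : V) (X : Set V)
    (E' : Set (V × V)) (w' : V × V → ℝ) : Prop :=
  (∀ u v : V, ((u, v) ∈ E' ↔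
      (u ∉ X ∧ v ∉ X ∧ ((u, v) ∈ E ∨ (u = s ∧ ∃ x ∈ X, (x, v) ∈ E))))) ∧
  (∀ u v : V, (u, v) ∈ E' → u ≠ s → w' (u, v) = w (u, v)) ∧
  (∀ v : V, (s, v) ∈ E' →
      ((w' (s, v) : EReal) =
        sInf {r : EReal | ((s, v) ∈ E ∧ r = (w (s, v) : EReal)) ∨
          ∃ x ∈ X, (x, v) ∈ E ∧ r = distG E w s x + (w (x, v) : EReal)}))

/-!
Every edge of the contracted graph `G'` is realised in `G` by a path of at most its weight
(an edge `s → v` coming from `x ∈ X` by a shortest `s`–`x` path followed by `x → v`), so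
distances can only grow under contraction; this is (b) and one half of (a).
For the other half, the function equal to `dist_{G'}(s, ·)` outside `X` and to `dist_G(s, ·)`
on `X` grows by at most `w(e)` along every edge `e` of `G`; summing along a path `P` from `s`
to `v ∉ X` in `G` gives `dist_{G'}(s, v) ≤ w(P)`.
-/

section Paths

variable {V : Type*} {E : Set (V × V)} {w : V × V → ℝ}

lemma IsPath.append {u m v : V} {P Q : List (V × V)}
    (hP : IsPath E u m P) (hQ : IsPath E m v Q) : IsPath E u v (P ++ Q) := by
  induction hP with
  | nil => simpa using hQ
  | cons he _ ih => exact IsPath.cons he (ih hQ)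

lemma IsPath.single {a m : V} (he : (a, m) ∈ E) : IsPath E a m [(a, m)] :=
  IsPath.cons he (IsPath.nil m)

@[simp] lemma pweight_nil : pweight w [] = 0 := rfl

@[simp] lemma pweight_cons (e : V × V) (P : List (V × V)) :
    pweight w (e :: P) = w e + pweight w P := by simp [pweight]

@[simp] lemma pweight_append (P Q : List (V × V)) :
    pweight w (P ++ Q) = pweight w P + pweight w Q := by simp [pweight]

lemma pweight_nonneg (hw : ∀ e ∈ E, 0 ≤ w e) {u v : V} {P : List (V × V)}
    (hP : IsPath E u v P) : 0 ≤ pweight w P := by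
  induction hP with
  | nil => simp
  | cons he _ ih => rw [pweight_cons]; exact add_nonneg (hw _ he) ih

lemma distG_le_pweight {u v : V} {P : List (V × V)} (hP : IsPath E u v P) :
    distG E w u v ≤ pweight w P :=
  sInf_le ⟨P, hP, rfl⟩

lemma distG_le_weight {a m : V} (he : (a, m) ∈ E) : distG E w a m ≤ w (a, m) := by
  simpa using distG_le_pweight (w := w) (IsPath.single he)

lemma distG_self_nonpos (u : V) : distG E w u u ≤ 0 := by
  simpa using distG_le_pweight (w := w) (IsPath.nil (E := E) u)

lemma exists_pweight_lt_of_distG_lt {u v : V} {r : EReal} (h : distG E w u v < r) :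
    ∃ P, IsPath E u v P ∧ (pweight w P : EReal) < r := by
  obtain ⟨_, ⟨P, hP, rfl⟩, hlt⟩ := sInf_lt_iff.1 h
  exact ⟨P, hP, hlt⟩

lemma distG_nonneg (hw : ∀ e ∈ E, 0 ≤ w e) (u v : V) : 0 ≤ distG E w u v :=
  le_sInf fun _ ⟨_, hP, hr⟩ => hr ▸ EReal.coe_nonneg.2 (pweight_nonneg hw hP)

lemma distG_ne_bot (hw : ∀ e ∈ E, 0 ≤ w e) (u v : V) : distG E w u v ≠ ⊥ :=
  ne_bot_of_le_ne_bot EReal.zero_ne_bot (distG_nonneg hw u v)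

lemma distG_self (hw : ∀ e ∈ E, 0 ≤ w e) (u : V) : distG E w u u = 0 :=
  le_antisymm (distG_self_nonpos u) (distG_nonneg hw u u)

lemma distG_le_add_pweight (z : V) {x v : V} {Q : List (V × V)} (hQ : IsPath E x v Q) :
    distG E w z v ≤ distG E w z x + pweight w Q := by
  refine EReal.le_add_of_forall_gt (.inr (EReal.coe_ne_top _)) (.inr (EReal.coe_ne_bot _))
    fun a ha b hb => ?_
  obtain ⟨P, hP, hPa⟩ := exists_pweight_lt_of_distG_lt ha
  calc distG E w z v ≤ pweight w (P ++ Q) := distG_le_pweight (hP.append hQ)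
    _ = (pweight w P : EReal) + pweight w Q := by rw [pweight_append, EReal.coe_add]
    _ ≤ a + b := add_le_add hPa.le hb.le

lemma distG_triangle (hw : ∀ e ∈ E, 0 ≤ w e) (u x v : V) :
    distG E w u v ≤ distG E w u x + distG E w x v := by
  refine EReal.le_add_of_forall_gt (.inl (distG_ne_bot hw u x)) (.inr (distG_ne_bot hw x v))
    fun a ha b hb => ?_
  obtain ⟨Q, hQ, hQb⟩ := exists_pweight_lt_of_distG_lt hb
  calc distG E w u v ≤ distG E w u x + pweight w Q := distG_le_add_pweight u hQ
    _ ≤ a + b := add_le_add ha.le hQb.le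

lemma le_add_pweight_of_isPath {f : V → EReal}
    (hf : ∀ a m, (a, m) ∈ E → f m ≤ f a + w (a, m))
    {u v : V} {P : List (V × V)} (hP : IsPath E u v P) : f v ≤ f u + pweight w P := by
  induction hP with
  | nil => simp
  | @cons a m _ P he _ ih =>
    calc _ ≤ f m + pweight w P := ih
      _ ≤ f a + w (a, m) + pweight w P := add_le_add_left (hf a m he) _
      _ = f a + pweight w ((a, m) :: P) := by rw [pweight_cons, EReal.coe_add, add_assoc]

end Paths

open Classical in
noncomputable def contractionPotential {V : Type*} (E : Set (V × V)) (w : V × V → ℝ) (s : V)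
    (X : Set V) (E' : Set (V × V)) (w' : V × V → ℝ) (u : V) : EReal :=
  if u ∈ X then distG E w s u else distG E' w' s u

namespace IsContraction

variable {V : Type*} {E : Set (V × V)} {w : V × V → ℝ} {s : V} {X : Set V}
  {E' : Set (V × V)} {w' : V × V → ℝ}

lemma distG_le_weight (hC : IsContraction E w s X E' w') {a m : V} (he : (a, m) ∈ E') :
    distG E w a m ≤ w' (a, m) := by
  obtain ⟨hmem, hweight, hweight_s⟩ := hC
  by_cases ha : a = s
  · subst ha
    rw [hweight_s m he]
    refine le_sInf ?_
    rintro r (⟨hE, rfl⟩ | ⟨x, -, hxm, rfl⟩)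
    · exact _root_.distG_le_weight hE
    · simpa using distG_le_add_pweight (w := w) a (IsPath.single hxm)
  · obtain ⟨-, -, hE | ⟨has, -⟩⟩ := (hmem a m).1 he
    · rw [hweight a m he ha]
      exact _root_.distG_le_weight hE
    · exact absurd has ha

lemma distG_le_distG (hC : IsContraction E w s X E' w') (hw : ∀ e ∈ E, 0 ≤ w e) (u v : V) :
    distG E w u v ≤ distG E' w' u v := by
  refine le_sInf ?_
  rintro _ ⟨P, hP, rfl⟩
  have hpot : ∀ a m, (a, m) ∈ E' → distG E w u m ≤ distG E w u a + w' (a, m) :=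
    fun a m he => (distG_triangle hw u a m).trans (add_le_add_right (hC.distG_le_weight he) _)
  simpa [distG_self hw] using le_add_pweight_of_isPath hpot hP

lemma weight_le_of_mem_of_mem (hC : IsContraction E w s X E' w') (hsX : s ∉ X) {x m : V}
    (hx : x ∈ X) (hm : m ∉ X) (he : (x, m) ∈ E) :
    (s, m) ∈ E' ∧ (w' (s, m) : EReal) ≤ distG E w s x + w (x, m) := by
  have hsm : (s, m) ∈ E' := (hC.1 s m).2 ⟨hsX, hm, .inr ⟨rfl, x, hx, he⟩⟩
  exact ⟨hsm, (hC.2.2 m hsm).symm ▸ sInf_le (.inr ⟨x, hx, he, rfl⟩)⟩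

lemma weight_le_of_not_mem (hC : IsContraction E w s X E' w') {a m : V}
    (ha : a ∉ X) (hm : m ∉ X) (he : (a, m) ∈ E) :
    (a, m) ∈ E' ∧ w' (a, m) ≤ w (a, m) := by
  have ham : (a, m) ∈ E' := (hC.1 a m).2 ⟨ha, hm, .inl he⟩
  refine ⟨ham, ?_⟩
  by_cases has : a = s
  · subst has
    exact EReal.coe_le_coe_iff.1 ((hC.2.2 m ham).symm ▸ sInf_le (.inl ⟨he, rfl⟩))
  · exact (hC.2.1 a m ham has).le

lemma distG_le_contractionPotential (hC : IsContraction E w s X E' w')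
    (hw : ∀ e ∈ E, 0 ≤ w e) (u : V) :
    distG E w s u ≤ contractionPotential E w s X E' w' u := by
  unfold contractionPotential
  split_ifs
  · exact le_rfl
  · exact hC.distG_le_distG hw s u

lemma contractionPotential_le_add_weight (hC : IsContraction E w s X E' w')
    (hw : ∀ e ∈ E, 0 ≤ w e) (hsX : s ∉ X) {a m : V} (he : (a, m) ∈ E) :
    contractionPotential E w s X E' w' m ≤ contractionPotential E w s X E' w' a + w (a, m) := by
  by_cases hm : m ∈ X
  · rw [contractionPotential, if_pos hm]
    calc distG E w s m ≤ distG E w s a + w (a, m) := by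
          simpa using distG_le_add_pweight (w := w) s (IsPath.single he)
      _ ≤ _ := add_le_add_left (hC.distG_le_contractionPotential hw a) _
  rw [contractionPotential, if_neg hm]
  by_cases ha : a ∈ X
  · obtain ⟨hsm, hw'⟩ := hC.weight_le_of_mem_of_mem hsX ha hm he
    rw [contractionPotential, if_pos ha]
    exact (_root_.distG_le_weight hsm).trans hw'
  · obtain ⟨ham, hw'⟩ := hC.weight_le_of_not_mem ha hm he
    rw [contractionPotential, if_neg ha]
    calc distG E' w' s m ≤ distG E' w' s a + w' (a, m) := by
          simpa using distG_le_add_pweight (w := w') s (IsPath.single ham)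
      _ ≤ distG E' w' s a + w (a, m) := add_le_add_right (EReal.coe_le_coe_iff.2 hw') _

lemma distG_source_le (hC : IsContraction E w s X E' w') (hw : ∀ e ∈ E, 0 ≤ w e)
    (hsX : s ∉ X) {v : V} (hv : v ∉ X) : distG E' w' s v ≤ distG E w s v := by
  refine le_sInf ?_
  rintro _ ⟨P, hP, rfl⟩
  have hpath := le_add_pweight_of_isPath
    (fun a m he => hC.contractionPotential_le_add_weight hw hsX he) hP
  rw [contractionPotential, if_neg hv, contractionPotential, if_neg hsX] at hpath
  calc distG E' w' s v ≤ distG E' w' s s + pweight w P := hpath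
    _ ≤ 0 + pweight w P := add_le_add_left (distG_self_nonpos s) _
    _ = pweight w P := zero_add _

end IsContraction

theorem stmt2_general {V : Type*}
    (E : Set (V × V)) (w : V × V → ℝ)
    (hw : ∀ e ∈ E, 0 ≤ w e)
    (s : V)
    (t : ℕ)
    (N : Finset V) (hN : IsNearSet E w s t N)
    (E' : Set (V × V)) (w' : V × V → ℝ)
    (hC : IsContraction E w s (↑N : Set V) E' w') :
    (∀ v : V, v ∉ N → distG E w s v = distG E' w' s v) ∧
    (∀ u v : V, u ∉ N → v ∉ N → distG E w u v ≤ distG E' w' u v) := by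
  have hsN : s ∉ (N : Set V) := hN.1
  exact ⟨fun v hv => le_antisymm (hC.distG_le_distG hw s v) (hC.distG_source_le hw hsN hv),
    fun u v _ _ => hC.distG_le_distG hw u v⟩

/-- Contracting the `t` nearest vertices `Near_t(s)` into the source `s` preserves
distances from `s`, and does not decrease distances between remaining vertices. -/
theorem stmt2 {V : Type*} [Fintype V]
    (E : Set (V × V)) (w : V × V → ℝ)
    (hw : ∀ e ∈ E, 0 ≤ w e)
    (hA1 : Assumption1 E w) (hA2 : Assumption2 E w)
    (s : V) (hs : ∀ u : V, (u, s) ∉ E)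
    (t : ℕ) (ht : 0 < t)
    (N : Finset V) (hN : IsNearSet E w s t N)
    (E' : Set (V × V)) (w' : V × V → ℝ)
    (hC : IsContraction E w s (↑N : Set V) E' w') :
    (∀ v : V, v ∉ N → distG E w s v = distG E' w' s v) ∧
    (∀ u v : V, u ∉ N → v ∉ N → distG E w u v ≤ distG E' w' u v) :=
  stmt2_general E w hw s t N hN E' w' hC
end

section
/- Let V_0 be a finite set, V ⊆ V_0, U = V_0 \ V, Z ⊆ V_0, and let t and K be positive integers. For each u ∈ V let NL'(u) be a set of at most t + 1 elements of V_0, and suppose every element of V_0 lies in at most K of the sets NL'(u), u ∈ V. For each b ∈ V let E_t(b) be a set of at most t pairs (b, v) with v ∈ V. Define Z* = Z \ U, B = {u ∈ V : NL'(u) ∩ U ≠ ∅}, and Y = ⋃_{b ∈ B ∪ Z*} ⋃_{(b,v) ∈ E_t(b), v ∈ V \ (B ∪ Z*)} NL'(v). Then |Z* ∪ B ∪ Y| ≤ (|Z| + K·|U|)·(1 + t(t + 1)). -/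
/-- Size bound on `Z* ∪ B ∪ Y`: if each of the at most-`(t+1)`-element lists `NL'(u)`
receives any fixed vertex of `V₀` at most `K` times, and each `E_t(b)` has at most `t`
elements of `V`, then `|Z* ∪ B ∪ Y| ≤ (|Z| + K·|U|)·(1 + t(t+1))` where `U = V₀ \ V`,
`Z* = Z \ U`, `B = {u ∈ V : NL'(u) ∩ U ≠ ∅}` and
`Y = ⋃_{b ∈ B ∪ Z*} ⋃_{v ∈ E_t(b), v ∈ V \ (B ∪ Z*)} NL'(v)`. -/
theorem stmt5 {α : Type*} [DecidableEq α]
    (V₀ V : Finset α) (hV : V ⊆ V₀)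
    (U : Finset α) (hU : U = V₀ \ V)
    (Z : Finset α) (hZV : Z ⊆ V₀)
    (t K : ℕ) (ht : 0 < t) (hK : 0 < K)
    (NL' : α → Finset α)
    (hNLcard : ∀ u ∈ V, (NL' u).card ≤ t + 1)
    (hNLsub : ∀ u ∈ V, NL' u ⊆ V₀)
    (hcong : ∀ x ∈ V₀, (V.filter fun u => x ∈ NL' u).card ≤ K)
    (Et : α → Finset α)
    (hEtcard : ∀ b ∈ V, (Et b).card ≤ t)
    (hEtsub : ∀ b ∈ V, Et b ⊆ V)
    (Zs B Y : Finset α)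
    (hZs : Zs = Z \ U)
    (hB : B = V.filter fun u => ((NL' u) ∩ U).Nonempty)
    (hY : Y = (B ∪ Zs).biUnion fun b =>
      ((Et b).filter fun v => v ∈ V ∧ v ∉ B ∪ Zs).biUnion NL') :
    (Zs ∪ B ∪ Y).card ≤ (Z.card + K * U.card) * (1 + t * (t + 1)) := by
  have hZsV : Zs ⊆ V := by
    intro x hx
    rw [hZs, Finset.mem_sdiff, hU, Finset.mem_sdiff] at hx
    obtain ⟨hxZ, hx2⟩ := hx
    by_contra h
    exact hx2 ⟨hZV hxZ, h⟩
  have hBV : B ⊆ V := by rw [hB]; exact Finset.filter_subset _ _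
  have hZsZ : Zs ⊆ Z := by rw [hZs]; exact Finset.sdiff_subset
  have hBcard : B.card ≤ K * U.card := by
    have hsub : B ⊆ U.biUnion (fun x => V.filter fun u => x ∈ NL' u) := by
      intro b hb
      rw [hB, Finset.mem_filter] at hb
      obtain ⟨hbV, x, hx⟩ := hb
      rw [Finset.mem_inter] at hx
      exact Finset.mem_biUnion.2 ⟨x, hx.2, Finset.mem_filter.2 ⟨hbV, hx.1⟩⟩
    calc B.card ≤ (U.biUnion (fun x => V.filter fun u => x ∈ NL' u)).card :=
          Finset.card_le_card hsub
      _ ≤ ∑ x ∈ U, (V.filter fun u => x ∈ NL' u).card := Finset.card_biUnion_le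
      _ ≤ ∑ _x ∈ U, K := Finset.sum_le_sum (fun x hx =>
          hcong x (by rw [hU] at hx; exact (Finset.mem_sdiff.1 hx).1))
      _ = U.card * K := by rw [Finset.sum_const, smul_eq_mul]
      _ = K * U.card := mul_comm _ _
  have hBZcard : (B ∪ Zs).card ≤ Z.card + K * U.card := by
    calc (B ∪ Zs).card ≤ B.card + Zs.card := Finset.card_union_le _ _
      _ ≤ K * U.card + Z.card :=
          Nat.add_le_add hBcard (Finset.card_le_card hZsZ)
      _ = Z.card + K * U.card := Nat.add_comm _ _
  have hYcard : Y.card ≤ (Z.card + K * U.card) * (t * (t + 1)) := by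
    rw [hY]
    calc ((B ∪ Zs).biUnion fun b =>
          ((Et b).filter fun v => v ∈ V ∧ v ∉ B ∪ Zs).biUnion NL').card
        ≤ ∑ b ∈ B ∪ Zs,
            (((Et b).filter fun v => v ∈ V ∧ v ∉ B ∪ Zs).biUnion NL').card :=
          Finset.card_biUnion_le
      _ ≤ ∑ _b ∈ B ∪ Zs, t * (t + 1) := by
          apply Finset.sum_le_sum
          intro b hb
          have hbV : b ∈ V := (Finset.mem_union.1 hb).elim (fun h => hBV h)
            (fun h => hZsV h)
          calc (((Et b).filter fun v => v ∈ V ∧ v ∉ B ∪ Zs).biUnion NL').card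
              ≤ ∑ v ∈ (Et b).filter fun v => v ∈ V ∧ v ∉ B ∪ Zs, (NL' v).card :=
                Finset.card_biUnion_le
            _ ≤ ∑ _v ∈ (Et b).filter fun v => v ∈ V ∧ v ∉ B ∪ Zs, (t + 1) :=
                Finset.sum_le_sum (fun v hv =>
                  hNLcard v (Finset.mem_filter.1 hv).2.1)
            _ = ((Et b).filter fun v => v ∈ V ∧ v ∉ B ∪ Zs).card * (t + 1) := by
                rw [Finset.sum_const, smul_eq_mul]
            _ ≤ t * (t + 1) := by
                apply Nat.mul_le_mul_right
                exact le_trans (Finset.card_filter_le _ _) (hEtcard b hbV)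
      _ = (B ∪ Zs).card * (t * (t + 1)) := by rw [Finset.sum_const, smul_eq_mul]
      _ ≤ (Z.card + K * U.card) * (t * (t + 1)) :=
          Nat.mul_le_mul_right _ hBZcard
  calc (Zs ∪ B ∪ Y).card ≤ (Zs ∪ B).card + Y.card := Finset.card_union_le _ _
    _ ≤ (B ∪ Zs).card + Y.card := by rw [Finset.union_comm]
    _ ≤ (Z.card + K * U.card) + (Z.card + K * U.card) * (t * (t + 1)) :=
        Nat.add_le_add hBZcard hYcard
    _ = (Z.card + K * U.card) * (1 + t * (t + 1)) := by ring
end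

section
/- Let G = (V, E) be a weighted digraph with n = |V| in which edges sharing a common tail have pairwise distinct weights, and let t, p ≤ n be positive integers. Then there exist a set Z_0 ⊆ V and a subgraph G_0 of G with V(G_0) = V such that: (i) for each v ∈ V, either outdeg_{G_0}(v) ≥ t or N⁺_{G_0}(v) ⊇ N⁺_G(v) \ Z_0; (ii) for each v ∈ V, outdeg_{G_0}(v) ≤ 3t; (iii) for each v ∈ V, indeg_{G_0}(v) ≤ p; (iv) |Z_0| ≤ 3nt/p; and (v) for all vertices v, x, y with vx, vy ∈ E, if w(vx) < w(vy) and y ∈ N⁺_{G_0}(v), then x ∈ N⁺_{G_0}(v) ∪ Z_0. -/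
open Finset

section Aux

open scoped Classical

variable {V : Type*} [Fintype V]

noncomputable def outdegF (A : Finset (V × V)) (v : V) : ℕ :=
  (A.filter (fun e => e.1 = v)).card

noncomputable def indegF (A : Finset (V × V)) (y : V) : ℕ :=
  (A.filter (fun e => e.2 = y)).card

variable (E : Finset (V × V)) (w : V × V → ℝ) (t p : ℕ)

structure Good (A : Finset (V × V)) (Z : Finset V) : Prop where
  subE : A ⊆ E
  out_le : ∀ v, outdegF A v ≤ 3 * t
  in_lt : ∀ y, y ∉ Z → indegF A y < p
  in_eq : ∀ y, y ∈ Z → indegF A y = p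
  order : ∀ v x y, (v, x) ∈ E → (v, y) ∈ E → w (v, x) < w (v, y) → (v, y) ∈ A →
      (v, x) ∈ A ∨ x ∈ Z

def Acts (A : Finset (V × V)) (Z : Finset V) (v : V) : Prop :=
  outdegF A v < 3 * t ∧ ((A.filter (fun e => e.1 = v ∧ e.2 ∉ Z)).card < t) ∧
    ∃ y, (v, y) ∈ E ∧ (v, y) ∉ A ∧ y ∉ Z

lemma step {A : Finset (V × V)} {Z : Finset V} (hG : Good E w t p A Z)
    {v : V} (hv : Acts E t A Z v) :
    ∃ A' Z', Good E w t p A' Z' ∧ A ⊆ A' ∧ A.card < A'.card := by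
  obtain ⟨hout, _, y₀, hy₀E, hy₀A, hy₀Z⟩ := hv
  set S : Finset (V × V) := E.filter (fun e => e.1 = v ∧ e ∉ A ∧ e.2 ∉ Z) with hS
  have hSne : S.Nonempty := ⟨(v, y₀), by simp [hS, hy₀E, hy₀A, hy₀Z]⟩
  obtain ⟨e, heS, hemin⟩ := S.exists_min_image w hSne
  have heE : e ∈ E := (mem_filter.mp heS).1
  obtain ⟨he1, heA, he2Z⟩ := (mem_filter.mp heS).2
  set A' : Finset (V × V) := insert e A with hA'
  have hindeg_e : indegF A' e.2 = indegF A e.2 + 1 := by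
    unfold indegF
    rw [hA', filter_insert, if_pos rfl, card_insert_of_notMem]
    intro h
    exact heA (mem_filter.mp h).1
  have hindeg_ne : ∀ u, u ≠ e.2 → indegF A' u = indegF A u := by
    intro u hu
    unfold indegF
    rw [hA', filter_insert, if_neg (fun h => hu h.symm)]
  have hin_le : indegF A' e.2 ≤ p := by
    have := hG.in_lt e.2 he2Z
    omega
  set Z' : Finset V := if indegF A' e.2 = p then insert e.2 Z else Z with hZ'
  have hZsub : Z ⊆ Z' := by
    rw [hZ']; split_ifs
    · exact subset_insert _ _
    · exact Subset.rfl
  refine ⟨A', Z', ?_, subset_insert _ _, card_lt_card (ssubset_insert heA)⟩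
  constructor
  · exact insert_subset heE hG.subE
  · intro u
    unfold outdegF
    rw [hA', filter_insert]
    split_ifs with h
    · have hu : u = v := h ▸ he1
      have h1 : (insert e (A.filter fun e' => e'.1 = u)).card
          ≤ (A.filter fun e' => e'.1 = u).card + 1 := card_insert_le _ _
      have h2 : outdegF A v < 3 * t := hout
      unfold outdegF at h2
      subst hu
      omega
    · exact hG.out_le u
  · intro u huZ'
    have huZ : u ∉ Z := fun h => huZ' (hZsub h)
    by_cases hue : u = e.2
    · have hne : indegF A' e.2 ≠ p := by
        intro h
        rw [hZ', if_pos h] at huZ'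
        exact huZ' (by rw [hue]; exact mem_insert_self _ _)
      have hlt := hG.in_lt e.2 he2Z
      rw [hue]
      omega
    · rw [hindeg_ne u hue]
      exact hG.in_lt u huZ
  · intro u huZ'
    by_cases huZ : u ∈ Z
    · have hue : u ≠ e.2 := fun h => he2Z (h ▸ huZ)
      rw [hindeg_ne u hue]
      exact hG.in_eq u huZ
    · rw [hZ'] at huZ'
      by_cases hcond : indegF A' e.2 = p
      · rw [if_pos hcond] at huZ'
        rcases mem_insert.mp huZ' with rfl | h
        · exact hcond
        · exact absurd h huZ
      · rw [if_neg hcond] at huZ'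
        exact absurd huZ' huZ
  · intro a x y haxE hayE hwxy hayA'
    rcases mem_insert.mp hayA' with heq | hmem
    · -- (a, y) = e is the new edge
      have ha : a = v := (congrArg Prod.fst heq).trans he1
      by_cases hxZ : x ∈ Z
      · exact Or.inr (hZsub hxZ)
      · by_cases hxA : (a, x) ∈ A
        · exact Or.inl (mem_insert_of_mem hxA)
        · exfalso
          have hxS : (a, x) ∈ S := by
            rw [hS, mem_filter]
            exact ⟨haxE, ha, hxA, hxZ⟩
          have h1 := hemin _ hxS
          have h2 : w (a, y) = w e := congrArg w heq
          rw [h2] at hwxy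
          exact absurd (lt_of_lt_of_le hwxy h1) (lt_irrefl _)
    · rcases hG.order a x y haxE hayE hwxy hmem with h | h
      · exact Or.inl (mem_insert_of_mem h)
      · exact Or.inr (hZsub h)

lemma exists_terminal : ∀ (n : ℕ) (A : Finset (V × V)) (Z : Finset V),
    Good E w t p A Z → E.card - A.card ≤ n →
    ∃ A' Z', Good E w t p A' Z' ∧ ∀ v, ¬ Acts E t A' Z' v := by
  intro n
  induction n with
  | zero =>
    intro A Z hG hcard
    refine ⟨A, Z, hG, ?_⟩
    have hAE : A = E := eq_of_subset_of_card_le hG.subE (by omega)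
    rintro v ⟨-, -, y, hyE, hyA, -⟩
    exact hyA (hAE ▸ hyE)
  | succ n ih =>
    intro A Z hG hcard
    by_cases hact : ∃ v, Acts E t A Z v
    · obtain ⟨v, hv⟩ := hact
      obtain ⟨A', Z', hG', hsub, hlt⟩ := step E w t p hG hv
      have : E.card - A'.card ≤ n := by
        have := card_le_card hG'.subE
        omega
      exact ih A' Z' hG' this
    · exact ⟨A, Z, hG, fun v hv => hact ⟨v, hv⟩⟩

lemma ncard_out (A : Finset (V × V)) (v : V) :
    {y : V | (v, y) ∈ A}.ncard = outdegF A v := by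
  have hset : {y : V | (v, y) ∈ A} = ↑((A.filter (fun e => e.1 = v)).image Prod.snd) := by
    ext y
    simp only [Set.mem_setOf_eq, coe_image, Set.mem_image, mem_coe, mem_filter]
    constructor
    · intro h; exact ⟨(v, y), ⟨h, rfl⟩, rfl⟩
    · rintro ⟨⟨a, b⟩, ⟨hm, h1⟩, h2⟩
      simp only at h1 h2
      subst h1; subst h2; exact hm
  have hinj : Set.InjOn Prod.snd ((A.filter (fun e => e.1 = v) : Finset (V × V)) : Set (V × V)) := by
    intro a ha b hb hab
    simp only [mem_coe, mem_filter] at ha hb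
    exact Prod.ext (ha.2.trans hb.2.symm) hab
  rw [hset, Set.ncard_coe_finset, card_image_of_injOn hinj]
  rfl

lemma ncard_in (A : Finset (V × V)) (v : V) :
    {u : V | (u, v) ∈ A}.ncard = indegF A v := by
  have hset : {u : V | (u, v) ∈ A} = ↑((A.filter (fun e => e.2 = v)).image Prod.fst) := by
    ext u
    simp only [Set.mem_setOf_eq, coe_image, Set.mem_image, mem_coe, mem_filter]
    constructor
    · intro h; exact ⟨(u, v), ⟨h, rfl⟩, rfl⟩
    · rintro ⟨⟨a, b⟩, ⟨hm, h1⟩, h2⟩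
      simp only at h1 h2
      subst h1; subst h2; exact hm
  have hinj : Set.InjOn Prod.fst ((A.filter (fun e => e.2 = v) : Finset (V × V)) : Set (V × V)) := by
    intro a ha b hb hab
    simp only [mem_coe, mem_filter] at ha hb
    exact Prod.ext hab (ha.2.trans hb.2.symm)
  rw [hset, Set.ncard_coe_finset, card_image_of_injOn hinj]
  rfl

end Aux

/-- Existence of the permanently heavy vertices `Z₀` and the subgraph `G₀` of alive
edges: (i) every vertex has at least `t` alive outgoing edges or keeps all its outgoing
edges not pointing into `Z₀`; (ii) alive out-degrees are at most `3t`; (iii) alive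
in-degrees are at most `p`; (iv) `|Z₀| ≤ 3nt/p`; (v) alive outgoing edges of any vertex
are its smallest-weight outgoing edges, except possibly for edges pointing into `Z₀`. -/
theorem stmt6 {V : Type*} [Fintype V]
    (E : Set (V × V)) (w : V × V → ℝ)
    (hw : ∀ e ∈ E, 0 ≤ w e)
    (hdw : ∀ v x y : V, (v, x) ∈ E → (v, y) ∈ E → x ≠ y → w (v, x) ≠ w (v, y))
    (t p : ℕ) (ht : 0 < t) (hp : 0 < p)
    (htn : t ≤ Fintype.card V) (hpn : p ≤ Fintype.card V) :
    ∃ (Z₀ : Set V) (E₀ : Set (V × V)), E₀ ⊆ E ∧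
      (∀ v : V, t ≤ {y : V | (v, y) ∈ E₀}.ncard ∨
        {y : V | (v, y) ∈ E} \ Z₀ ⊆ {y : V | (v, y) ∈ E₀}) ∧
      (∀ v : V, {y : V | (v, y) ∈ E₀}.ncard ≤ 3 * t) ∧
      (∀ v : V, {u : V | (u, v) ∈ E₀}.ncard ≤ p) ∧
      ((Z₀.ncard : ℝ) ≤ 3 * (Fintype.card V : ℝ) * (t : ℝ) / (p : ℝ)) ∧
      (∀ v x y : V, (v, x) ∈ E → (v, y) ∈ E → w (v, x) < w (v, y) → (v, y) ∈ E₀ →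
        ((v, x) ∈ E₀ ∨ x ∈ Z₀)) := by
  classical
  set EF : Finset (V × V) := (Set.toFinite E).toFinset with hEF
  have hmemE : ∀ e : V × V, e ∈ EF ↔ e ∈ E := fun e => Set.Finite.mem_toFinset _
  have hGood0 : Good EF w t p (∅ : Finset (V × V)) (∅ : Finset V) := by
    constructor
    · exact empty_subset _
    · intro v; simp [outdegF]
    · intro y _; simpa [indegF] using hp
    · intro y hy; simp at hy
    · intro v x y _ _ _ h; simp at h
  obtain ⟨A, Z, hG, hterm⟩ :=
    exists_terminal EF w t p EF.card ∅ ∅ hGood0 (by omega)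
  refine ⟨↑Z, ↑A, ?_, ?_, ?_, ?_, ?_, ?_⟩
  · intro e he
    exact (hmemE e).mp (hG.subE he)
  · -- property (i)
    intro v
    have hnact := hterm v
    rw [Acts] at hnact
    push_neg at hnact
    by_cases h1 : outdegF A v < 3 * t
    · by_cases h2 : (A.filter (fun e => e.1 = v ∧ e.2 ∉ Z)).card < t
      · right
        intro y hy
        obtain ⟨hyE, hyZ⟩ := hy
        simp only [Set.mem_setOf_eq] at hyE ⊢
        by_contra hyA
        have hyA' : (v, y) ∉ A := by simpa using hyA
        have hyZ' : y ∈ Z := hnact h1 h2 y ((hmemE _).mpr hyE) hyA'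
        exact hyZ (by simpa using hyZ')
      · left
        push_neg at h2
        have hle : (A.filter (fun e => e.1 = v ∧ e.2 ∉ Z)).card
            ≤ (A.filter (fun e => e.1 = v)).card := by
          apply card_le_card
          intro e he
          rw [mem_filter] at he ⊢
          exact ⟨he.1, he.2.1⟩
        have hfin : t ≤ outdegF A v := le_trans h2 hle
        rw [← ncard_out] at hfin
        simpa using hfin
    · left
      push_neg at h1
      have : t ≤ outdegF A v := le_trans (by omega) h1
      rw [← ncard_out] at this
      simpa using this
  · intro v
    have := hG.out_le v
    rw [← ncard_out] at this
    simpa using this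
  · intro v
    have : indegF A v ≤ p := by
      by_cases h : v ∈ Z
      · exact le_of_eq (hG.in_eq v h)
      · exact le_of_lt (hG.in_lt v h)
    rw [← ncard_in] at this
    simpa using this
  · -- counting
    have hAout : A.card = ∑ v : V, outdegF A v := by
      exact card_eq_sum_card_fiberwise (fun e _ => mem_univ e.1)
    have hAin : A.card = ∑ v : V, indegF A v := by
      exact card_eq_sum_card_fiberwise (fun e _ => mem_univ e.2)
    have hZsum : ∑ y ∈ Z, indegF A y = Z.card * p := by
      rw [Finset.sum_congr rfl (fun y hy => hG.in_eq y hy)]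
      simp [mul_comm]
    have h1 : Z.card * p ≤ A.card := by
      rw [hAin, ← hZsum]
      exact Finset.sum_le_sum_of_subset (subset_univ Z)
    have h2 : A.card ≤ Fintype.card V * (3 * t) := by
      rw [hAout]
      calc ∑ v : V, outdegF A v ≤ ∑ _v : V, 3 * t :=
            Finset.sum_le_sum (fun v _ => hG.out_le v)
        _ = Fintype.card V * (3 * t) := by simp [mul_comm]
    have h3 : Z.card * p ≤ Fintype.card V * (3 * t) := le_trans h1 h2
    rw [Set.ncard_coe_finset]
    rw [le_div_iff₀ (by exact_mod_cast hp)]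
    have h4 : ((Z.card : ℝ)) * p ≤ (Fintype.card V : ℝ) * (3 * t) := by exact_mod_cast h3
    nlinarith [h4]
  · intro v x y hvx hvy hlt hyA
    have := hG.order v x y ((hmemE _).mpr hvx) ((hmemE _).mpr hvy) hlt (by simpa using hyA)
    rcases this with h | h
    · exact Or.inl (by simpa using h)
    · exact Or.inr (by simpa using h)
end

section
/- Let m ≥ 2, L ≥ 0, and δ ≥ m be natural numbers, and define f : ℕ → ℕ by f(x) = x if x ≤ L and f(x) = x − (δ − (m − 1)) if x ≥ L + δ. Then for all finite multisets A and B of natural numbers, each of cardinality at most m − 1 (counted with multiplicity) and each of whose elements is either ≤ L or ≥ L + δ: Σ_{a ∈ A} 2^a ≤ Σ_{b ∈ B} 2^b if and only if Σ_{a ∈ A} 2^{f(a)} ≤ Σ_{b ∈ B} 2^{f(b)}. -/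
/-!
Split each multiset into its low exponents (`≤ L`) and its high exponents (`≥ L + δ`).
The low part has at most `m - 1` terms `≤ 2 ^ L`, so it is less than `2 ^ (L + m - 1)`,
while the high part is `2 ^ (L + δ) * H`, and `2 ^ (L + m - 1) * H` after compression, for one
and the same `H`. In both cases the total is a multiple of a power `q` plus a remainder below `q`,
so both comparisons reduce to the lexicographic comparison of (high quotient, low remainder).
-/

theorem Nat.mul_add_le_mul_add_iff_lex {q k k' l l' : ℕ} (hl : l < q) (hl' : l' < q) :
    q * k + l ≤ q * k' + l' ↔ k < k' ∨ k = k' ∧ l ≤ l' := by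
  constructor
  · intro h
    rcases lt_trichotomy k k' with hk | rfl | hk
    · exact .inl hk
    · exact .inr ⟨rfl, by omega⟩
    · have : q * (k' + 1) ≤ q * k := Nat.mul_le_mul_left q hk
      rw [Nat.mul_succ] at this
      omega
  · rintro (hk | ⟨rfl, hl⟩)
    · have : q * (k + 1) ≤ q * k' := Nat.mul_le_mul_left q hk
      rw [Nat.mul_succ] at this
      omega
    · omega

namespace Multiset

theorem sum_map_two_pow_lt {S : Multiset ℕ} {L n : ℕ} (hS : ∀ a ∈ S, a ≤ L) (hcard : card S ≤ n) :
    (S.map (2 ^ ·)).sum < 2 ^ (L + n) :=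
  calc (S.map (2 ^ ·)).sum ≤ card S * 2 ^ L := by
        simpa using sum_map_le_sum_map (2 ^ ·) (fun _ ↦ 2 ^ L) fun a ha ↦
          Nat.pow_le_pow_right two_pos (hS a ha)
    _ ≤ n * 2 ^ L := Nat.mul_le_mul_right _ hcard
    _ < 2 ^ n * 2 ^ L := Nat.mul_lt_mul_of_pos_right n.lt_two_pow_self (by positivity)
    _ = 2 ^ (L + n) := by rw [pow_add, mul_comm]

end Multiset

open Multiset in
theorem exists_sum_two_pow_eq_mul_add_of_compress {m L δ : ℕ} (hδ : m ≤ δ) {f : ℕ → ℕ}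
    (hf1 : ∀ x : ℕ, x ≤ L → f x = x) (hf2 : ∀ x : ℕ, L + δ ≤ x → f x = x - (δ - (m - 1)))
    {S : Multiset ℕ} (hS : card S ≤ m - 1) (hSel : ∀ a ∈ S, a ≤ L ∨ L + δ ≤ a) :
    ∃ H l, l < 2 ^ (L + (m - 1)) ∧
      (S.map fun a ↦ 2 ^ a).sum = 2 ^ (L + δ) * H + l ∧
      (S.map fun a ↦ 2 ^ f a).sum = 2 ^ (L + (m - 1)) * H + l := by
  set low := S.filter (· ≤ L)
  set high := S.filter fun a ↦ ¬ a ≤ L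
  set H := (high.map fun a ↦ 2 ^ (a - (L + δ))).sum
  set l := (low.map (2 ^ ·)).sum
  have hhigh : ∀ a ∈ high, L + δ ≤ a := fun a ha ↦
    (hSel a (mem_filter.1 ha).1).resolve_left (mem_filter.1 ha).2
  have hsum (g : ℕ → ℕ) (s : ℕ) (hg_low : ∀ a ∈ low, g a = a)
      (hg_high : ∀ a ∈ high, g a = s + (a - (L + δ))) :
      (S.map fun a ↦ 2 ^ g a).sum = 2 ^ s * H + l := by
    rw [← filter_add_not (· ≤ L) S, map_add, sum_add, add_comm, ← sum_map_mul_left]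
    congr 1 <;> refine congrArg sum (map_congr rfl fun a ha ↦ ?_)
    · rw [hg_high a ha, pow_add]
    · rw [hg_low a ha]
  refine ⟨H, l, ?_, hsum id (L + δ) (fun _ _ ↦ rfl) fun a ha ↦ ?_,
    hsum f (L + (m - 1)) (fun a ha ↦ hf1 a (mem_filter.1 ha).2) fun a ha ↦ ?_⟩
  · exact sum_map_two_pow_lt (fun a ha ↦ (mem_filter.1 ha).2)
      ((card_le_card (filter_le _ _)).trans hS)
  · exact (Nat.add_sub_of_le (hhigh a ha)).symm
  · have := hhigh a ha
    rw [hf2 a this]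
    omega

theorem stmt13_general (m L δ : ℕ) (hδ : m ≤ δ)
    (f : ℕ → ℕ)
    (hf1 : ∀ x : ℕ, x ≤ L → f x = x)
    (hf2 : ∀ x : ℕ, L + δ ≤ x → f x = x - (δ - (m - 1)))
    (A B : Multiset ℕ)
    (hA : Multiset.card A ≤ m - 1) (hB : Multiset.card B ≤ m - 1)
    (hAel : ∀ a ∈ A, a ≤ L ∨ L + δ ≤ a) (hBel : ∀ b ∈ B, b ≤ L ∨ L + δ ≤ b) :
    ((A.map fun a => 2 ^ a).sum ≤ (B.map fun b => 2 ^ b).sum ↔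
      (A.map fun a => 2 ^ (f a)).sum ≤ (B.map fun b => 2 ^ (f b)).sum) := by
  obtain ⟨HA, lA, hlA, hA₁, hA₂⟩ := exists_sum_two_pow_eq_mul_add_of_compress hδ hf1 hf2 hA hAel
  obtain ⟨HB, lB, hlB, hB₁, hB₂⟩ := exists_sum_two_pow_eq_mul_add_of_compress hδ hf1 hf2 hB hBel
  have hpow : 2 ^ (L + (m - 1)) ≤ 2 ^ (L + δ) := Nat.pow_le_pow_right two_pos (by omega)
  rw [hA₁, hB₁, hA₂, hB₂, Nat.mul_add_le_mul_add_iff_lex (hlA.trans_le hpow) (hlB.trans_le hpow),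
    Nat.mul_add_le_mul_add_iff_lex hlA hlB]

/-- Compressing exponents: for `m ≥ 2`, `δ ≥ m` and `f(x) = x` on `x ≤ L`,
`f(x) = x − (δ − (m − 1))` on `x ≥ L + δ`, the comparison of `Σ 2^a` over two multisets
of at most `m − 1` exponents, each exponent being `≤ L` or `≥ L + δ`, is unchanged when
every exponent `a` is replaced by `f(a)`. -/
theorem stmt13 (m L δ : ℕ) (hm : 2 ≤ m) (hδ : m ≤ δ)
    (f : ℕ → ℕ)
    (hf1 : ∀ x : ℕ, x ≤ L → f x = x)
    (hf2 : ∀ x : ℕ, L + δ ≤ x → f x = x - (δ - (m - 1)))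
    (A B : Multiset ℕ)
    (hA : Multiset.card A ≤ m - 1) (hB : Multiset.card B ≤ m - 1)
    (hAel : ∀ a ∈ A, a ≤ L ∨ L + δ ≤ a) (hBel : ∀ b ∈ B, b ≤ L ∨ L + δ ≤ b) :
    ((A.map fun a => 2 ^ a).sum ≤ (B.map fun b => 2 ^ b).sum ↔
      (A.map fun a => 2 ^ (f a)).sum ≤ (B.map fun b => 2 ^ (f b)).sum) :=
  stmt13_general m L δ hδ f hf1 hf2 A B hA hB hAel hBel
end

section
/- Let ≤_lex be the relation on finite multisets of natural numbers defined recursively by: A ≤_lex B holds if A = ∅, or if B ≠ ∅ and either max A < max B, or max A = max B and A with one copy of max A removed ≤_lex B with one copy of max B removed. Then ≤_lex is a total (linear) order on finite multisets of natural numbers, and it is compatible with multiset sum: for all finite multisets A, B, C of natural numbers, A ≤_lex B implies A + C ≤_lex B + C. In particular, finite multisets of natural numbers with multiset sum, the empty multiset, and ≤_lex form a totally ordered commutative monoid. -/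
/-- The lexicographic comparison of two finite multisets of naturals, defined
recursively: `A ≤ₗ B` holds if `A = 0`, or if `B ≠ 0` and either `max A < max B`, or
`max A = max B` and `A` with one copy of its maximum removed `≤ₗ` `B` with one copy of
its maximum removed. (For a nonempty multiset of naturals, `Multiset.sup` is its
largest element.) -/
inductive MLexLe : Multiset ℕ → Multiset ℕ → Prop
  | empty (B : Multiset ℕ) : MLexLe 0 B
  | max_lt {A B : Multiset ℕ} (hA : A ≠ 0) (hB : B ≠ 0) (h : A.sup < B.sup) : MLexLe A B
  | max_eq {A B : Multiset ℕ} (hA : A ≠ 0) (hB : B ≠ 0) (h : A.sup = B.sup)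
      (hrec : MLexLe (A.erase A.sup) (B.erase B.sup)) : MLexLe A B

lemma mlex_sup_mem (A : Multiset ℕ) (hA : A ≠ 0) : A.sup ∈ A := by
  induction A using Multiset.induction with
  | empty => simp at hA
  | cons a s ih =>
    rcases eq_or_ne s 0 with rfl | h
    · simp
    · rw [Multiset.sup_cons]
      rcases le_total a s.sup with h' | h'
      · rw [sup_eq_right.2 h']
        exact Multiset.mem_cons_of_mem (ih h)
      · rw [sup_eq_left.2 h']
        exact Multiset.mem_cons_self a s

lemma mlex_erase_lt (A : Multiset ℕ) (hA : A ≠ 0) : A.erase A.sup < A :=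
  Multiset.erase_lt.2 (mlex_sup_mem A hA)

lemma mlex_cases {A B : Multiset ℕ} (h : MLexLe A B) (hA : A ≠ 0) :
    B ≠ 0 ∧ A.sup ≤ B.sup ∧
      (A.sup = B.sup → MLexLe (A.erase A.sup) (B.erase B.sup)) := by
  cases h with
  | empty => exact absurd rfl hA
  | max_lt hA hB h => exact ⟨hB, le_of_lt h, fun he => absurd he (ne_of_lt h)⟩
  | max_eq hA hB h hrec => exact ⟨hB, le_of_eq h, fun _ => hrec⟩

lemma mlex_refl : ∀ A : Multiset ℕ, MLexLe A A := by
  intro A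
  induction A using Multiset.strongInductionOn with
  | _ A ih =>
    rcases eq_or_ne A 0 with rfl | hA
    · exact MLexLe.empty 0
    · exact MLexLe.max_eq hA hA rfl (ih _ (mlex_erase_lt A hA))

lemma mlex_trans : ∀ A B C : Multiset ℕ, MLexLe A B → MLexLe B C → MLexLe A C := by
  intro A
  induction A using Multiset.strongInductionOn with
  | _ A ih =>
    intro B C h1 h2
    rcases eq_or_ne A 0 with rfl | hA
    · exact MLexLe.empty C
    obtain ⟨hB, hAB, hABr⟩ := mlex_cases h1 hA
    obtain ⟨hC, hBC, hBCr⟩ := mlex_cases h2 hB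
    rcases lt_or_eq_of_le (le_trans hAB hBC) with hlt | heq
    · exact MLexLe.max_lt hA hC hlt
    · have h1' : A.sup = B.sup := le_antisymm hAB (heq ▸ hBC)
      have h2' : B.sup = C.sup := h1' ▸ heq
      exact MLexLe.max_eq hA hC heq
        (ih _ (mlex_erase_lt A hA) _ _ (hABr h1') (hBCr h2'))

lemma mlex_antisymm : ∀ A B : Multiset ℕ, MLexLe A B → MLexLe B A → A = B := by
  intro A
  induction A using Multiset.strongInductionOn with
  | _ A ih =>
    intro B h1 h2
    rcases eq_or_ne A 0 with rfl | hA
    · by_contra hB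
      have hB' : B ≠ 0 := fun h => hB h.symm
      exact (mlex_cases h2 hB').1 rfl
    obtain ⟨hB, hAB, hABr⟩ := mlex_cases h1 hA
    obtain ⟨_, hBA, hBAr⟩ := mlex_cases h2 hB
    have hs : A.sup = B.sup := le_antisymm hAB hBA
    have he : A.erase A.sup = B.erase B.sup :=
      ih _ (mlex_erase_lt A hA) _ (hABr hs) (hBAr hs.symm)
    have hca := Multiset.cons_erase (mlex_sup_mem A hA)
    have hcb := Multiset.cons_erase (mlex_sup_mem B hB)
    rw [← hca, ← hcb, he, hs]

lemma mlex_total : ∀ A B : Multiset ℕ, MLexLe A B ∨ MLexLe B A := by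
  intro A
  induction A using Multiset.strongInductionOn with
  | _ A ih =>
    intro B
    rcases eq_or_ne A 0 with rfl | hA
    · exact Or.inl (MLexLe.empty B)
    rcases eq_or_ne B 0 with rfl | hB
    · exact Or.inr (MLexLe.empty A)
    rcases lt_trichotomy A.sup B.sup with h | h | h
    · exact Or.inl (MLexLe.max_lt hA hB h)
    · rcases ih _ (mlex_erase_lt A hA) (B.erase B.sup) with hr | hr
      · exact Or.inl (MLexLe.max_eq hA hB h hr)
      · exact Or.inr (MLexLe.max_eq hB hA h.symm hr)
    · exact Or.inr (MLexLe.max_lt hB hA h)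

lemma mlex_cons (x : ℕ) : ∀ A B : Multiset ℕ, MLexLe A B → MLexLe (x ::ₘ A) (x ::ₘ B) := by
  intro A
  induction A using Multiset.strongInductionOn with
  | _ A ih =>
    intro B h
    have hxA : x ::ₘ A ≠ 0 := Multiset.cons_ne_zero
    have hxB : x ::ₘ B ≠ 0 := Multiset.cons_ne_zero
    cases h with
    | empty =>
      rcases lt_or_ge x (x ::ₘ B).sup with hlt | hle
      · refine MLexLe.max_lt hxA hxB ?_
        rwa [show (x ::ₘ (0:Multiset ℕ)).sup = x by simp]
      · have hsB : (x ::ₘ B).sup = x := le_antisymm hle (by simp [Multiset.sup_cons])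
        have hsA : (x ::ₘ (0:Multiset ℕ)).sup = x := by simp
        refine MLexLe.max_eq hxA hxB (hsA.trans hsB.symm) ?_
        rw [hsA, Multiset.erase_cons_head]
        exact MLexLe.empty _
    | max_lt hA hB hlt =>
      rcases lt_or_ge x B.sup with hx | hx
      · have hsA : (x ::ₘ A).sup = x ⊔ A.sup := Multiset.sup_cons x A
        have hsB : (x ::ₘ B).sup = B.sup := by
          rw [Multiset.sup_cons]; exact sup_eq_right.2 (le_of_lt hx)
        refine MLexLe.max_lt hxA hxB ?_
        rw [hsA, hsB]
        exact sup_lt_iff.2 ⟨hx, hlt⟩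
      · have hsA : (x ::ₘ A).sup = x := by
          rw [Multiset.sup_cons]
          exact sup_eq_left.2 (le_trans (le_of_lt hlt) hx)
        have hsB : (x ::ₘ B).sup = x := by
          rw [Multiset.sup_cons]; exact sup_eq_left.2 hx
        refine MLexLe.max_eq hxA hxB (hsA.trans hsB.symm) ?_
        rw [hsA, hsB, Multiset.erase_cons_head, Multiset.erase_cons_head]
        exact MLexLe.max_lt hA hB hlt
    | max_eq hA hB heq hrec =>
      rcases lt_or_ge x A.sup with hx | hx
      · have hsA : (x ::ₘ A).sup = A.sup := by
          rw [Multiset.sup_cons]; exact sup_eq_right.2 (le_of_lt hx)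
        have hsB : (x ::ₘ B).sup = B.sup := by
          rw [Multiset.sup_cons]; exact sup_eq_right.2 (le_of_lt (heq ▸ hx))
        refine MLexLe.max_eq hxA hxB (by rw [hsA, hsB, heq]) ?_
        rw [hsA, hsB,
          Multiset.erase_cons_tail _ (fun hh => absurd (hh ▸ hx) (lt_irrefl _)),
          Multiset.erase_cons_tail _ (fun hh => absurd (hh ▸ heq ▸ hx) (lt_irrefl _))]
        exact ih _ (mlex_erase_lt A hA) _ hrec
      · have hsA : (x ::ₘ A).sup = x := by
          rw [Multiset.sup_cons]; exact sup_eq_left.2 hx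
        have hsB : (x ::ₘ B).sup = x := by
          rw [Multiset.sup_cons]; exact sup_eq_left.2 (heq ▸ hx)
        refine MLexLe.max_eq hxA hxB (hsA.trans hsB.symm) ?_
        rw [hsA, hsB, Multiset.erase_cons_head, Multiset.erase_cons_head]
        exact MLexLe.max_eq hA hB heq hrec

lemma mlex_add : ∀ A B C : Multiset ℕ, MLexLe A B → MLexLe (A + C) (B + C) := by
  intro A B C h
  induction C using Multiset.induction with
  | empty => simpa using h
  | cons c s ih =>
    have := mlex_cons c _ _ ih
    simpa [Multiset.add_cons] using this
/-- `≤ₗ` is a total (linear) order on finite multisets of naturals (reflexive,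
transitive, antisymmetric, total), and it is compatible with multiset sum; hence
finite multisets of naturals with multiset sum, the empty multiset and `≤ₗ` form a
totally ordered commutative monoid. -/
theorem stmt15 :
    (∀ A : Multiset ℕ, MLexLe A A) ∧
    (∀ A B C : Multiset ℕ, MLexLe A B → MLexLe B C → MLexLe A C) ∧
    (∀ A B : Multiset ℕ, MLexLe A B → MLexLe B A → A = B) ∧
    (∀ A B : Multiset ℕ, MLexLe A B ∨ MLexLe B A) ∧
    (∀ A B C : Multiset ℕ, MLexLe A B → MLexLe (A + C) (B + C)) := by
  exact ⟨mlex_refl, mlex_trans, mlex_antisymm, mlex_total, mlex_add⟩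
end
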